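/- Fix 2 < r ≤ ∞ and set γ = (r−2)/r. Let W be a symmetric n×n matrix whose only nonzero entries are W_{2k−1,2k} = W_{2k,2k−1} = c_k for k ∈ [m] with 2m ≤ n. Then M_r(W) = ‖W‖_{r→r*} = ( 2 Σ_{k=1}^m |c_k|^{r/(r−2)} )^{(r−2)/r}, where r* = r/(r−1). -/

import Mathlib

open Matrix ENNReal

/-- The ℓ_q norm on ℝⁿ for an extended-real exponent `q ∈ [1,∞]`. -/
noncomputable def lnorm {n : ℕ} (q : ℝ≥0∞) (x : Fin n → ℝ) : ℝ :=
  if q = ⊤ then ⨆ i, |x i| else (∑ i, |x i| ^ q.toReal) ^ (1 / q.toReal)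

/-- The `r → p` operator norm of an `n × n` real matrix. -/
noncomputable def opNorm {n : ℕ} (r p : ℝ≥0∞) (A : Matrix (Fin n) (Fin n) ℝ) : ℝ :=
  sSup {c | ∃ x : Fin n → ℝ, lnorm r x ≤ 1 ∧ c = lnorm p (A.mulVec x)}

/-- The value of the ℓ_r-Grothendieck problem `M_r(A)`. -/
noncomputable def grothendieck {n : ℕ} (r : ℝ≥0∞) (A : Matrix (Fin n) (Fin n) ℝ) : ℝ :=
  sSup {c | ∃ x : Fin n → ℝ, lnorm r x ≤ 1 ∧ c = x ⬝ᵥ A.mulVec x}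

/-- The Hölder conjugate of `p ∈ [1,∞]`. -/
noncomputable def holderConj (p : ℝ≥0∞) : ℝ≥0∞ :=
  if p = 1 then ⊤ else if p = ⊤ then 1 else ENNReal.ofReal (p.toReal / (p.toReal - 1))

/-!
The matrix acts by `(W x)ᵢ = dᵢ x_{σ i}`, where the involution `σ` swaps `2k` and `2k + 1` and
`d` carries `c_k` at both positions. Hölder's inequality gives `xᵀ W x ≤ ‖x‖_r ‖W x‖_{r*}`, hence
`M_r(W) ≤ ‖W‖_{r→r*}`, and the generalized Hölder inequality with `1/r* = γ + 1/r` gives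
`‖d ⊙ (x ∘ σ)‖_{r*} ≤ ‖d‖_{1/γ} ‖x ∘ σ‖_r = ‖d‖_{1/γ} ‖x‖_r`, where
`‖d‖_{1/γ} = (2 ∑ₖ |c_k|^{1/γ})^γ`. Conversely `xᵢ ∝ εᵢ |dᵢ|^{1/(r-2)}`, with signs chosen so that
`εᵢ ε_{σ i} dᵢ = |dᵢ|`, is a unit vector on which the quadratic form equals `‖d‖_{1/γ}`.
-/
section lnorm

variable {n : ℕ}

lemma lnorm_top (x : Fin n → ℝ) : lnorm ⊤ x = ⨆ i, |x i| := if_pos rfl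

lemma lnorm_of_ne_top {q : ℝ≥0∞} (hq : q ≠ ⊤) (x : Fin n → ℝ) :
    lnorm q x = (∑ i, |x i| ^ q.toReal) ^ (1 / q.toReal) := if_neg hq

lemma lnorm_nonneg (q : ℝ≥0∞) (x : Fin n → ℝ) : 0 ≤ lnorm q x := by
  unfold lnorm
  split_ifs
  · exact Real.iSup_nonneg fun i => abs_nonneg _
  · positivity

lemma abs_le_lnorm_top (x : Fin n → ℝ) (i : Fin n) : |x i| ≤ lnorm ⊤ x :=
  lnorm_top x ▸ le_ciSup (f := fun i => |x i|) (Set.finite_range _).bddAbove i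

lemma lnorm_top_le {x : Fin n → ℝ} {C : ℝ} (hC : 0 ≤ C) (hx : ∀ i, |x i| ≤ C) :
    lnorm ⊤ x ≤ C :=
  lnorm_top x ▸ Real.iSup_le hx hC

lemma lnorm_comp_perm (q : ℝ≥0∞) (x : Fin n → ℝ) (σ : Equiv.Perm (Fin n)) :
    lnorm q (x ∘ σ) = lnorm q x := by
  unfold lnorm
  split_ifs
  · exact σ.iSup_comp (g := fun i => |x i|)
  · exact congrArg (· ^ (1 / q.toReal)) (Equiv.sum_comp σ (fun i => |x i| ^ q.toReal))

lemma lnorm_mul_le_lnorm_top_mul {q : ℝ≥0∞} (hq : q ≠ 0) (x y : Fin n → ℝ) :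
    lnorm q (x * y) ≤ lnorm ⊤ x * lnorm q y := by
  have hxi := abs_le_lnorm_top x
  have hx0 := lnorm_nonneg ⊤ x
  rcases eq_or_ne q ⊤ with rfl | hq'
  · refine lnorm_top_le (mul_nonneg hx0 (lnorm_nonneg _ _)) fun i => ?_
    rw [Pi.mul_apply, abs_mul]
    exact mul_le_mul (hxi i) (abs_le_lnorm_top y i) (abs_nonneg _) hx0
  · have hq0 : 0 < q.toReal := ENNReal.toReal_pos hq hq'
    rw [lnorm_of_ne_top hq', lnorm_of_ne_top hq', ← Real.rpow_rpow_inv hx0 hq0.ne',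
      ← one_div, ← Real.mul_rpow (by positivity) (by positivity), Finset.mul_sum]
    gcongr with i
    rw [Pi.mul_apply, abs_mul, Real.mul_rpow (abs_nonneg _) (abs_nonneg _)]
    gcongr
    exact hxi i

theorem lnorm_mul_le {p q s : ℝ≥0∞} [p.HolderTriple q s] (hp : p ≠ 0) (hq : q ≠ 0)
    (x y : Fin n → ℝ) : lnorm s (x * y) ≤ lnorm p x * lnorm q y := by
  rcases eq_or_ne p ⊤ with rfl | hp'
  · obtain rfl : q = s := (ENNReal.HolderTriple.unique ⊤ q s q).symm
    exact lnorm_mul_le_lnorm_top_mul hq x y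
  rcases eq_or_ne q ⊤ with rfl | hq'
  · obtain rfl : p = s := (ENNReal.HolderTriple.unique p ⊤ s p).symm
    rw [mul_comm x, mul_comm (lnorm p x)]
    exact lnorm_mul_le_lnorm_top_mul hp y x
  have hp0 : 0 < p.toReal := ENNReal.toReal_pos hp hp'
  have hq0 : 0 < q.toReal := ENNReal.toReal_pos hq hq'
  have hpqs := ENNReal.HolderTriple.toReal s hp0 hq0
  have hs' : s ≠ ⊤ := ne_top_of_le_ne_top hp' (ENNReal.HolderTriple.le p q s)
  have hs0 := hpqs.pos'
  rw [lnorm_of_ne_top hp', lnorm_of_ne_top hq', lnorm_of_ne_top hs']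
  calc (∑ i, |(x * y) i| ^ s.toReal) ^ (1 / s.toReal)
      ≤ ((∑ i, |x i| ^ p.toReal) ^ (s.toReal / p.toReal) *
          (∑ i, |y i| ^ q.toReal) ^ (s.toReal / q.toReal)) ^ (1 / s.toReal) := by
        gcongr
        exact Real.Lr_rpow_le_Lp_mul_Lq _ x y hpqs
    _ = _ := by
        rw [Real.mul_rpow (by positivity) (by positivity), ← Real.rpow_mul (by positivity),
          ← Real.rpow_mul (by positivity)]
        congr 2 <;> field_simp

theorem dotProduct_le_lnorm_mul_lnorm {p q : ℝ≥0∞} [p.HolderConjugate q] (x y : Fin n → ℝ) :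
    x ⬝ᵥ y ≤ lnorm p x * lnorm q y := by
  calc x ⬝ᵥ y ≤ lnorm 1 (x * y) := by
        simpa [lnorm, dotProduct] using Finset.sum_le_sum fun i _ => le_abs_self (x i * y i)
    _ ≤ lnorm p x * lnorm q y :=
        lnorm_mul_le (ENNReal.HolderConjugate.ne_zero p q) (ENNReal.HolderConjugate.ne_zero q p) x y

end lnorm

lemma two_mul_toReal_inv_lt_one {r : ℝ≥0∞} (hr : 2 < r) : 2 * r⁻¹.toReal < 1 := by
  have : r⁻¹.toReal < (2⁻¹ : ℝ≥0∞).toReal :=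
    (ENNReal.toReal_lt_toReal (ENNReal.inv_ne_top.2 (by positivity)) (by simp)).2
      (ENNReal.inv_lt_inv.2 hr)
  rw [ENNReal.toReal_inv 2, ENNReal.toReal_ofNat] at this
  linarith

lemma holderConjugate_holderConj {r : ℝ≥0∞} (hr : 1 < r) : r.HolderConjugate (holderConj r) := by
  rcases eq_or_ne r ⊤ with rfl | hr'
  · simp only [holderConj, ENNReal.top_ne_one, if_false, if_true]
    infer_instance
  have ht : 1 < r.toReal := by
    simpa using (ENNReal.toReal_lt_toReal ENNReal.one_ne_top hr').2 hr
  rw [holderConj, if_neg hr.ne', if_neg hr']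
  simpa [ENNReal.ofReal_toReal hr', Real.conjExponent] using
    (Real.HolderConjugate.conjExponent ht).ennrealOfReal

lemma holderTriple_ofReal_holderConj {r : ℝ≥0∞} (hr : 2 < r) :
    (ENNReal.ofReal (1 / (1 - 2 * r⁻¹.toReal))).HolderTriple r (holderConj r) := by
  rcases eq_or_ne r ⊤ with rfl | hr'
  · simp only [holderConj, ENNReal.top_ne_one, if_false, if_true, ENNReal.inv_top,
      ENNReal.toReal_zero, mul_zero, sub_zero, div_one, ENNReal.ofReal_one]
    infer_instance
  have ht : 2 < r.toReal := by
    simpa using (ENNReal.toReal_lt_toReal ENNReal.ofNat_ne_top hr').2 hr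
  have hr1 : r ≠ 1 := by rintro rfl; norm_num at hr
  rw [holderConj, if_neg hr1, if_neg hr', ENNReal.toReal_inv]
  conv_lhs => rw [← ENNReal.ofReal_toReal hr']
  refine Real.HolderTriple.ennrealOfReal ⟨?_, ?_, by linarith⟩
  · field_simp
    ring
  · have := two_mul_toReal_inv_lt_one hr
    rw [ENNReal.toReal_inv] at this
    exact one_div_pos.2 (by linarith)

lemma sSup_eq_of_le_of_le_of_exists {α : Type*} {P : α → Prop} {f g : α → ℝ} {V : ℝ}
    (hfg : ∀ x, P x → f x ≤ g x) (hgV : ∀ x, P x → g x ≤ V) (hV : ∃ x, P x ∧ f x = V) :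
    sSup {c | ∃ x, P x ∧ c = f x} = V ∧ sSup {c | ∃ x, P x ∧ c = g x} = V := by
  obtain ⟨x₀, hx₀, hfx₀⟩ := hV
  have hfV : ∀ x, P x → f x ≤ V := fun x hx => (hfg x hx).trans (hgV x hx)
  constructor
  · refine le_antisymm (csSup_le ⟨_, x₀, hx₀, rfl⟩ ?_) (le_csSup ?_ ⟨x₀, hx₀, hfx₀.symm⟩)
    · rintro _ ⟨x, hx, rfl⟩; exact hfV x hx
    · exact ⟨V, by rintro _ ⟨x, hx, rfl⟩; exact hfV x hx⟩
  · refine le_antisymm (csSup_le ⟨_, x₀, hx₀, rfl⟩ ?_) ?_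
    · rintro _ ⟨x, hx, rfl⟩; exact hgV x hx
    · refine hfx₀ ▸ (hfg x₀ hx₀).trans (le_csSup ?_ ⟨x₀, hx₀, rfl⟩)
      exact ⟨V, by rintro _ ⟨x, hx, rfl⟩; exact hgV x hx⟩

lemma lnorm_le_one_of_abs_le_rpow {n : ℕ} {r : ℝ≥0∞} (hr : r ≠ 0) {x a : Fin n → ℝ}
    (ha : ∀ i, 0 ≤ a i) (hsum : ∑ i, a i ≤ 1) (hx : ∀ i, |x i| ≤ a i ^ r⁻¹.toReal) :
    lnorm r x ≤ 1 := by
  rcases eq_or_ne r ⊤ with rfl | hr'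
  · exact lnorm_top_le zero_le_one fun i => by simpa using hx i
  have hrt : 0 < r.toReal := ENNReal.toReal_pos hr hr'
  rw [lnorm_of_ne_top hr']
  refine Real.rpow_le_one (by positivity) (le_trans (Finset.sum_le_sum fun i _ => ?_) hsum)
    (by positivity)
  calc |x i| ^ r.toReal ≤ (a i ^ r⁻¹.toReal) ^ r.toReal := by gcongr; exact hx i
    _ = a i := by
      rw [← Real.rpow_mul (ha i), ENNReal.toReal_inv, inv_mul_cancel₀ hrt.ne', Real.rpow_one]

lemma dotProduct_mul_comp_eq_sq_mul_sum {n : ℕ} {σ : Equiv.Perm (Fin n)} {d ε : Fin n → ℝ}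
    (hd : ∀ i, |d (σ i)| = |d i|) (hεd : ∀ i, ε i * ε (σ i) * d i = |d i|) {e : ℝ} (he : 0 ≤ e)
    (t : ℝ) :
    (fun i => t * ε i * |d i| ^ e) ⬝ᵥ (d * ((fun i => t * ε i * |d i| ^ e) ∘ σ)) =
      t ^ 2 * ∑ i, |d i| ^ (1 + 2 * e) := by
  rw [Finset.mul_sum]
  refine Finset.sum_congr rfl fun i _ => ?_
  calc t * ε i * |d i| ^ e * (d i * (t * ε (σ i) * |d (σ i)| ^ e))
      = t ^ 2 * (ε i * ε (σ i) * d i) * (|d i| ^ e * |d i| ^ e) := by rw [hd i]; ring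
    _ = t ^ 2 * |d i| ^ (1 + 2 * e) := by
      rw [hεd i, two_mul, Real.rpow_add_of_nonneg (abs_nonneg _) zero_le_one (by positivity),
        Real.rpow_add_of_nonneg (abs_nonneg _) he he, Real.rpow_one]
      ring

theorem exists_lnorm_le_one_dotProduct_mul_comp_eq {n : ℕ} {r : ℝ≥0∞} (hr : 2 < r)
    {σ : Equiv.Perm (Fin n)} {d ε : Fin n → ℝ} (hd : ∀ i, |d (σ i)| = |d i|)
    (hε : ∀ i, |ε i| ≤ 1) (hεd : ∀ i, ε i * ε (σ i) * d i = |d i|) :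
    ∃ x, lnorm r x ≤ 1 ∧
      x ⬝ᵥ (d * (x ∘ σ)) = lnorm (ENNReal.ofReal (1 / (1 - 2 * r⁻¹.toReal))) d := by
  set ρ := r⁻¹.toReal
  have hρ0 : 0 ≤ ρ := ENNReal.toReal_nonneg
  have hγ : 1 - 2 * ρ ≠ 0 := by linarith [two_mul_toReal_inv_lt_one hr]
  set p := 1 / (1 - 2 * ρ)
  have hp : 0 < p := one_div_pos.2 (by linarith [two_mul_toReal_inv_lt_one hr])
  have hpρ : 1 + 2 * (ρ * p) = p := by linear_combination -(mul_one_div_cancel hγ)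
  set D := ∑ i, |d i| ^ p
  have hD : 0 ≤ D := by positivity
  set t := D ^ (-ρ)
  have ht : 0 ≤ t := by positivity
  refine ⟨fun i => t * ε i * |d i| ^ (ρ * p), ?_, ?_⟩
  · refine lnorm_le_one_of_abs_le_rpow (zero_lt_two.trans hr).ne' (a := fun i => D⁻¹ * |d i| ^ p)
      (fun i => by positivity) ?_ fun i => ?_
    · rw [← Finset.mul_sum]
      exact inv_mul_le_one_of_le₀ le_rfl hD
    · rw [Real.mul_rpow (by positivity) (by positivity), Real.inv_rpow hD, ← Real.rpow_neg hD,
        ← Real.rpow_mul (abs_nonneg _), mul_comm p, abs_mul, abs_mul, abs_of_nonneg ht,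
        abs_of_nonneg (by positivity : 0 ≤ |d i| ^ (ρ * p))]
      exact mul_le_mul_of_nonneg_right (mul_le_of_le_one_right ht (hε i)) (by positivity)
  calc (fun i => t * ε i * |d i| ^ (ρ * p)) ⬝ᵥ (d * ((fun i => t * ε i * |d i| ^ (ρ * p)) ∘ σ))
      = t ^ 2 * D := by
        rw [dotProduct_mul_comp_eq_sq_mul_sum hd hεd (by positivity) t, hpρ]
    _ = D ^ (1 - 2 * ρ) := by
        rcases hD.eq_or_lt with hD0 | hD0
        · rw [← hD0, mul_zero, Real.zero_rpow hγ]
        · rw [show 1 - 2 * ρ = -ρ + -ρ + 1 by ring, Real.rpow_add hD0, Real.rpow_add hD0,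
            Real.rpow_one, sq]
    _ = _ := by
        rw [lnorm_of_ne_top ENNReal.ofReal_ne_top, ENNReal.toReal_ofReal hp.le, one_div_one_div]

def pairSwap (n : ℕ) : Equiv.Perm (Fin n) :=
  Function.Involutive.toPerm
    (fun i => ⟨if i.val % 2 = 0 then (if i.val + 1 < n then i.val + 1 else i.val) else i.val - 1,
      by split_ifs <;> omega⟩)
    (fun i => by ext; dsimp only; split_ifs <;> omega)

lemma pairSwap_val (n : ℕ) (i : Fin n) : (pairSwap n i).val =
    if i.val % 2 = 0 then (if i.val + 1 < n then i.val + 1 else i.val) else i.val - 1 := rfl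

def pairWeight (n m : ℕ) (c : ℕ → ℝ) : Fin n → ℝ :=
  fun i => if i.val < 2 * m then c (i.val / 2) else 0

lemma pairWeight_pairSwap (n m : ℕ) (c : ℕ → ℝ) (i : Fin n) :
    pairWeight n m c (pairSwap n i) = pairWeight n m c i := by
  unfold pairWeight
  rw [pairSwap_val]
  split_ifs <;> first | rfl | omega | (congr 1; omega)

lemma exists_sign_pairWeight {n m : ℕ} (hn : 2 * m ≤ n) (c : ℕ → ℝ) :
    ∃ ε : Fin n → ℝ, (∀ i, |ε i| ≤ 1) ∧
      ∀ i, ε i * ε (pairSwap n i) * pairWeight n m c i = |pairWeight n m c i| := by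
  set d := pairWeight n m c
  refine ⟨fun i => if i.val % 2 = 0 ∧ d i < 0 then -1 else 1,
    fun i => by dsimp only; split_ifs <;> simp, fun i => ?_⟩
  rcases eq_or_ne (d i) 0 with hd | hd
  · simp [hd]
  have hi : i.val < 2 * m := by
    by_contra h; exact hd (if_neg h)
  have hσ : (pairSwap n i).val % 2 = 0 ↔ ¬ i.val % 2 = 0 := by
    rw [pairSwap_val]; split_ifs <;> omega
  dsimp only
  rw [show d (pairSwap n i) = d i from pairWeight_pairSwap n m c i]
  by_cases he : i.val % 2 = 0 <;> by_cases hneg : d i < 0 <;>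
    simp [he, hneg, hσ, abs_of_neg, abs_of_nonneg, le_of_not_gt]

lemma sum_range_two_mul_div_two (g : ℕ → ℝ) (m : ℕ) :
    ∑ j ∈ Finset.range (2 * m), g (j / 2) = 2 * ∑ k ∈ Finset.range m, g k := by
  induction m with
  | zero => simp
  | succ m ih =>
    rw [show 2 * (m + 1) = 2 * m + 1 + 1 by ring, Finset.sum_range_succ, Finset.sum_range_succ, ih,
      Finset.sum_range_succ, show (2 * m + 1) / 2 = m by omega, show 2 * m / 2 = m by omega]
    ring

lemma sum_fin_ite_div_two {n m : ℕ} (hn : 2 * m ≤ n) (g : ℕ → ℝ) :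
    ∑ i : Fin n, (if i.val < 2 * m then g (i.val / 2) else 0) = 2 * ∑ k ∈ Finset.range m, g k := by
  rw [Fin.sum_univ_eq_sum_range (fun j => if j < 2 * m then g (j / 2) else 0),
    ← Finset.sum_range_add_sum_Ico _ hn,
    Finset.sum_congr rfl fun j hj => if_pos (Finset.mem_range.1 hj),
    Finset.sum_eq_zero fun j hj => if_neg (by simp at hj; omega), add_zero,
    sum_range_two_mul_div_two]

lemma lnorm_pairWeight {n m : ℕ} (hn : 2 * m ≤ n) (c : ℕ → ℝ) {p : ℝ} (hp : 0 < p) :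
    lnorm (ENNReal.ofReal p) (pairWeight n m c) =
      (2 * ∑ k ∈ Finset.range m, |c k| ^ p) ^ (1 / p) := by
  rw [lnorm_of_ne_top ENNReal.ofReal_ne_top, ENNReal.toReal_ofReal hp.le,
    ← sum_fin_ite_div_two hn]
  congr 1
  refine Finset.sum_congr rfl fun i _ => ?_
  unfold pairWeight
  split_ifs <;> simp [Real.zero_rpow hp.ne']

lemma apply_eq_ite_pairSwap {n m : ℕ} {W : Matrix (Fin n) (Fin n) ℝ} {c : ℕ → ℝ} (hn : 2 * m ≤ n)
    (hW : W.IsSymm)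
    (hsupp : ∀ i j : Fin n, W i j ≠ 0 → ∃ k : ℕ, k < m ∧
      ((i.val = 2 * k ∧ j.val = 2 * k + 1) ∨ (i.val = 2 * k + 1 ∧ j.val = 2 * k)))
    (hval : ∀ k : ℕ, k < m → ∀ i j : Fin n,
      i.val = 2 * k → j.val = 2 * k + 1 → W i j = c k) (i j : Fin n) :
    W i j = if j = pairSwap n i then pairWeight n m c i else 0 := by
  have hσ := pairSwap_val n i
  by_cases hij : j = pairSwap n i ∧ i.val < 2 * m
  · obtain ⟨rfl, hi⟩ := hij
    rw [if_pos rfl, pairWeight, if_pos hi]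
    obtain ⟨k, hk | hk⟩ := Nat.even_or_odd' i.val
    · rw [show i.val / 2 = k by omega]
      exact hval k (by omega) _ _ hk (by rw [hσ]; split_ifs <;> omega)
    · rw [show i.val / 2 = k by omega, ← hW.apply]
      exact hval k (by omega) _ _ (by rw [hσ]; split_ifs <;> omega) hk
  · have hzero : W i j = 0 := by
      by_contra h
      obtain ⟨k, hk, hik⟩ := hsupp i j h
      refine hij ⟨Fin.ext ?_, by omega⟩
      rw [hσ]
      split_ifs <;> omega
    rw [hzero]
    split_ifs with h
    · rw [pairWeight, if_neg (fun hi => hij ⟨h, hi⟩)]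
    · rfl

lemma mulVec_eq_mul_comp_of_apply_eq_ite {n : ℕ} {W : Matrix (Fin n) (Fin n) ℝ}
    {σ : Equiv.Perm (Fin n)} {d : Fin n → ℝ} (hW : ∀ i j, W i j = if j = σ i then d i else 0)
    (x : Fin n → ℝ) : W *ᵥ x = d * (x ∘ σ) := by
  ext i
  simp [Matrix.mulVec, dotProduct, hW]

/-- For `2 < r ≤ ∞` and a symmetric matrix whose only nonzero entries form pairs
`W_{2k-1,2k} = W_{2k,2k-1} = c_k` (0-based: `(2k, 2k+1)` for `k < m`),
`M_r(W) = ‖W‖_{r→r*} = (2 Σ_k |c_k|^{1/γ})^γ` with `γ = (r-2)/r = 1 - 2/r`. -/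
theorem grothendieck_paired {n m : ℕ} (W : Matrix (Fin n) (Fin n) ℝ) (hW : W.IsSymm)
    (c : ℕ → ℝ) (hn : 2 * m ≤ n) (r : ℝ≥0∞) (hr : 2 < r)
    (hsupp : ∀ i j : Fin n, W i j ≠ 0 → ∃ k : ℕ, k < m ∧
      ((i.val = 2 * k ∧ j.val = 2 * k + 1) ∨ (i.val = 2 * k + 1 ∧ j.val = 2 * k)))
    (hval : ∀ k : ℕ, k < m → ∀ i j : Fin n,
      i.val = 2 * k → j.val = 2 * k + 1 → W i j = c k) :
    grothendieck r W = opNorm r (holderConj r) W ∧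
    grothendieck r W =
      (2 * ∑ k ∈ Finset.range m, |c k| ^ (1 / (1 - 2 * (r⁻¹).toReal)))
        ^ (1 - 2 * (r⁻¹).toReal) := by
  have hmulVec := mulVec_eq_mul_comp_of_apply_eq_ite (apply_eq_ite_pairSwap hn hW hsupp hval)
  have hp : 0 < 1 / (1 - 2 * r⁻¹.toReal) :=
    one_div_pos.2 (by linarith [two_mul_toReal_inv_lt_one hr])
  have := holderConjugate_holderConj (ENNReal.one_lt_two.trans hr)
  have := holderTriple_ofReal_holderConj hr
  set V := lnorm (ENNReal.ofReal (1 / (1 - 2 * r⁻¹.toReal))) (pairWeight n m c) with hV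
  have hdot (x : Fin n → ℝ) (hx : lnorm r x ≤ 1) :
      x ⬝ᵥ W *ᵥ x ≤ lnorm (holderConj r) (W *ᵥ x) :=
    (dotProduct_le_lnorm_mul_lnorm x _).trans (mul_le_of_le_one_left (lnorm_nonneg _ _) hx)
  have hop (x : Fin n → ℝ) (hx : lnorm r x ≤ 1) :
      lnorm (holderConj r) (W *ᵥ x) ≤ V := by
    rw [hmulVec]
    refine (lnorm_mul_le (ENNReal.ofReal_pos.2 hp).ne' (zero_lt_two.trans hr).ne' _ _).trans ?_
    rw [lnorm_comp_perm]
    exact mul_le_of_le_one_right (lnorm_nonneg _ _) hx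
  have hwit : ∃ x, lnorm r x ≤ 1 ∧ x ⬝ᵥ W *ᵥ x = V := by
    obtain ⟨ε, hε, hεd⟩ := exists_sign_pairWeight hn c
    obtain ⟨x, hx, hxV⟩ := exists_lnorm_le_one_dotProduct_mul_comp_eq hr
      (fun i => by rw [pairWeight_pairSwap]) hε hεd
    exact ⟨x, hx, hmulVec x ▸ hxV⟩
  obtain ⟨hM, hN⟩ := sSup_eq_of_le_of_le_of_exists hdot hop hwit
  refine ⟨hM.trans hN.symm, hM.trans ?_⟩
  rw [hV, lnorm_pairWeight hn c hp, one_div_one_div]
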